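/- Let X be an ordered real Banach space whose positive cone is closed, generating, and normal, and let Y be a real normed space. Then each of the following sets of linear operators from X to Y is a linear subspace of the space L(X,Y) of bounded operators that is closed in the operator norm: the Lebesgue operators, the σ-Lebesgue operators, the w-Lebesgue operators, the σ-w-Lebesgue operators, the order-to-norm continuous operators, the σ-order-to-norm continuous operators, the order-to-weak continuous operators, and the σ-order-to-weak continuous operators. -/

import Mathlib

/-!
Every one of the eight classes consists of the operators sending each test net of some kind
(decreasing to `0` or order convergent to `0`; nets or sequences) to a norm null or a weakly
null net. Normality of the cone makes every test net eventually norm bounded, and along an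
eventually bounded net the operators with this property form a norm closed subspace of
`L(X, Y)`; the class is the intersection of these subspaces.

It remains to see that the operators of each class are bounded; all of them are
σ-w-Lebesgue. Such an operator `T` is bounded on the positive part `P` of the unit ball:
otherwise there are `w n ≥ 0` with `‖w n‖ ≤ 2⁻ⁿ` and `‖T (w n)‖ > n`, the tails of `∑ w n`
decrease to `0`, so `T (w n) → 0` weakly and, by uniform boundedness, `T (w n)` is norm
bounded. Since the cone is closed and generating, the Baire category theorem and the
closure-removal step of the open mapping theorem put a ball around `0` inside `2 • (P - P)`,
so `T` is bounded.
-/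

open Filter Set Topology Bornology

universe u

/-- `x_α ↓ 0`: the net `x` is decreasing with infimum `0`. -/
def DecreasesToZero {X : Type*} [Zero X] [PartialOrder X] {ι : Type*} [Preorder ι]
    (x : ι → X) : Prop :=
  Antitone x ∧ IsGLB (Set.range x) 0

/-- `x_α →o 0`: order convergence of the net `x` to `0`, i.e. there is a net `g_β`,
indexed by a (nonempty) directed set, decreasing with infimum `0`, such that for each `β`
there is `α_β` with `±x_α ≤ g_β` for all `α ≥ α_β`. -/
def OrderConvZero {X : Type u} [Zero X] [Neg X] [PartialOrder X] {ι : Type*} [Preorder ι]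
    (x : ι → X) : Prop :=
  ∃ (β : Type u) (pβ : Preorder β), Nonempty β ∧
    IsDirected β (fun b₁ b₂ => pβ.le b₁ b₂) ∧
    ∃ g : β → X, (∀ b₁ b₂ : β, pβ.le b₁ b₂ → g b₂ ≤ g b₁) ∧ IsGLB (Set.range g) 0 ∧
      ∀ b : β, ∃ a₀ : ι, ∀ a : ι, a₀ ≤ a → -g b ≤ x a ∧ x a ≤ g b

/-- `x_α →r 0`: relative uniform convergence of the net `x` to `0`: for some `u ≥ 0`
there is an increasing sequence `(α_n)` of indices with `±x_α ≤ (1/n)u` for all `α ≥ α_n`. -/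
def RuConvZero {X : Type*} [Zero X] [Neg X] [PartialOrder X] [SMul ℝ X] {ι : Type*} [Preorder ι]
    (x : ι → X) : Prop :=
  ∃ u : X, 0 ≤ u ∧ ∃ α : ℕ → ι, Monotone α ∧
    ∀ n : ℕ, 0 < n → ∀ a : ι, α n ≤ a → -((n : ℝ)⁻¹ • u) ≤ x a ∧ x a ≤ (n : ℝ)⁻¹ • u

/-- The positive cone of an ordered TVS is normal: the topology has a base of neighborhoods
of `0` consisting of full sets. -/
def NormalConeTVS (Y : Type*) [Zero Y] [PartialOrder Y] [TopologicalSpace Y] : Prop :=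
  ∀ U ∈ nhds (0 : Y), ∃ V ∈ nhds (0 : Y), V ⊆ U ∧
    ∀ a b x : Y, a ∈ V → b ∈ V → a ≤ x → x ≤ b → x ∈ V

section Statement15

variable {X Y : Type*} [NormedAddCommGroup X] [NormedSpace ℝ X] [PartialOrder X]
  [CovariantClass X X (· + ·) (· ≤ ·)] [PosSMulMono ℝ X] [CompleteSpace X]
  [NormedAddCommGroup Y] [NormedSpace ℝ Y]

/-- Lebesgue operator: `‖T x_α‖ → 0` for every net `x_α ↓ 0`. -/
def LebesgueOp (T : X →ₗ[ℝ] Y) : Prop :=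
  ∀ (ι : Type*) [Preorder ι] [Nonempty ι] [IsDirected ι (· ≤ ·)] (x : ι → X),
    DecreasesToZero x → Tendsto (fun a => ‖T (x a)‖) atTop (𝓝 0)

/-- σ-Lebesgue operator: `‖T x_n‖ → 0` for every sequence `x_n ↓ 0`. -/
def SigmaLebesgueOp (T : X →ₗ[ℝ] Y) : Prop :=
  ∀ x : ℕ → X, DecreasesToZero x → Tendsto (fun n => ‖T (x n)‖) atTop (𝓝 0)

/-- w-Lebesgue operator: `f (T x_α) → 0` for every continuous linear functional `f` and
every net `x_α ↓ 0`. -/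
def WLebesgueOp (T : X →ₗ[ℝ] Y) : Prop :=
  ∀ (ι : Type*) [Preorder ι] [Nonempty ι] [IsDirected ι (· ≤ ·)] (x : ι → X),
    DecreasesToZero x → ∀ f : Y →L[ℝ] ℝ, Tendsto (fun a => f (T (x a))) atTop (𝓝 0)

/-- σ-w-Lebesgue operator. -/
def SigmaWLebesgueOp (T : X →ₗ[ℝ] Y) : Prop :=
  ∀ x : ℕ → X, DecreasesToZero x →
    ∀ f : Y →L[ℝ] ℝ, Tendsto (fun n => f (T (x n))) atTop (𝓝 0)

/-- Order-to-norm continuous operator: `‖T x_α‖ → 0` for every net `x_α →o 0`. -/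
def OrderToNormContOp (T : X →ₗ[ℝ] Y) : Prop :=
  ∀ (ι : Type*) [Preorder ι] [Nonempty ι] [IsDirected ι (· ≤ ·)] (x : ι → X),
    OrderConvZero x → Tendsto (fun a => ‖T (x a)‖) atTop (𝓝 0)

/-- σ-order-to-norm continuous operator. -/
def SigmaOrderToNormContOp (T : X →ₗ[ℝ] Y) : Prop :=
  ∀ x : ℕ → X, OrderConvZero x → Tendsto (fun n => ‖T (x n)‖) atTop (𝓝 0)

/-- Order-to-weak continuous operator: `f (T x_α) → 0` for every continuous linear
functional `f` and every net `x_α →o 0`. -/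
def OrderToWeakContOp (T : X →ₗ[ℝ] Y) : Prop :=
  ∀ (ι : Type*) [Preorder ι] [Nonempty ι] [IsDirected ι (· ≤ ·)] (x : ι → X),
    OrderConvZero x → ∀ f : Y →L[ℝ] ℝ, Tendsto (fun a => f (T (x a))) atTop (𝓝 0)

/-- σ-order-to-weak continuous operator. -/
def SigmaOrderToWeakContOp (T : X →ₗ[ℝ] Y) : Prop :=
  ∀ x : ℕ → X, OrderConvZero x →
    ∀ f : Y →L[ℝ] ℝ, Tendsto (fun n => f (T (x n))) atTop (𝓝 0)

/-- The class of linear operators satisfying `P` forms a subspace of the space `L(X,Y)` of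
bounded operators, closed in the operator norm: every linear operator satisfying `P` is
continuous, and the corresponding set of continuous linear operators is a norm closed
linear subspace of `X →L[ℝ] Y`. -/
def IsClosedSubspaceOfBoundedOps (P : (X →ₗ[ℝ] Y) → Prop) : Prop :=
  (∀ T : X →ₗ[ℝ] Y, P T → Continuous T) ∧
  ∃ S : Submodule ℝ (X →L[ℝ] Y), IsClosed (S : Set (X →L[ℝ] Y)) ∧
    ∀ T : X →L[ℝ] Y, T ∈ S ↔ P (T : X →ₗ[ℝ] Y)

end Statement15

open scoped Pointwise

theorem tsum_nat_add_sub_tsum_nat_add_succ {G : Type*} [AddCommGroup G] [TopologicalSpace G]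
    [IsTopologicalAddGroup G] [T2Space G] {w : ℕ → G} (hs : Summable w) (n : ℕ) :
    ∑' k, w (k + n) - ∑' k, w (k + (n + 1)) = w n := by
  have h := hs.sum_add_tsum_nat_add (n + 1)
  rw [Finset.sum_range_succ] at h
  rw [eq_sub_of_add_eq' (hs.sum_add_tsum_nat_add n), eq_sub_of_add_eq' h]
  abel

theorem decreasesToZero_tsum_nat_add {G : Type*} [AddCommGroup G] [TopologicalSpace G]
    [IsTopologicalAddGroup G] [T2Space G] [PartialOrder G] [IsOrderedAddMonoid G]
    [OrderClosedTopology G] {w : ℕ → G} (hw : ∀ n, 0 ≤ w n) (hs : Summable w) :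
    DecreasesToZero fun n => ∑' k, w (k + n) := by
  have hanti : Antitone fun n => ∑' k, w (k + n) := antitone_nat_of_succ_le fun n =>
    sub_nonneg.1 ((tsum_nat_add_sub_tsum_nat_add_succ hs n).symm ▸ hw n)
  exact ⟨hanti, isGLB_of_tendsto_atTop hanti (tendsto_sum_nat_add w)⟩

theorem exists_norm_le_of_weakly_bounded {𝕜 E ι : Type*} [RCLike 𝕜] [NormedAddCommGroup E]
    [NormedSpace 𝕜 E] {y : ι → E} (h : ∀ f : StrongDual 𝕜 E, ∃ C, ∀ i, ‖f (y i)‖ ≤ C) :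
    ∃ C, ∀ i, ‖y i‖ ≤ C := by
  obtain ⟨C, hC⟩ := banach_steinhaus (g := fun i => NormedSpace.inclusionInDoubleDualLi 𝕜 (y i)) h
  exact ⟨C, fun i => (NormedSpace.inclusionInDoubleDualLi 𝕜).norm_map (y i) ▸ hC i⟩

theorem exists_tendsto_sum_of_ball_subset_closure {E : Type*} [NormedAddCommGroup E]
    [NormedSpace ℝ E] {s : Set E} {ε : ℝ} (hs : Metric.ball (0 : E) ε ⊆ closure s) {x : E}
    (hx : x ∈ Metric.ball (0 : E) ε) :
    ∃ z : ℕ → E, (∀ n, z n ∈ s) ∧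
      Tendsto (fun n => ∑ k ∈ Finset.range n, ((2 : ℝ) ^ k)⁻¹ • z k) atTop (𝓝 x) := by
  have hε : 0 < ε := Metric.pos_of_mem_ball hx
  have hstep : ∀ y : Metric.ball (0 : E) ε, ∃ z ∈ s, (2 : ℝ) • ((y : E) - z) ∈ Metric.ball 0 ε := by
    rintro ⟨y, hy⟩
    obtain ⟨z, hz, hyz⟩ := Metric.mem_closure_iff.1 (hs hy) (ε / 2) (half_pos hε)
    refine ⟨z, hz, ?_⟩
    rw [mem_ball_zero_iff, norm_smul, Real.norm_two, ← dist_eq_norm]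
    linarith
  choose z hzs hz using hstep
  -- the remainders `r (n + 1) = 2 • (r n - z (r n))` all stay in the ball
  let r : ℕ → Metric.ball (0 : E) ε := fun n =>
    Nat.rec ⟨x, hx⟩ (fun _ y => ⟨(2 : ℝ) • ((y : E) - z y), hz y⟩) n
  refine ⟨fun n => z (r n), fun n => hzs _, ?_⟩
  have hsum : ∀ n, ∑ k ∈ Finset.range n, ((2 : ℝ) ^ k)⁻¹ • z (r k) =
      x - ((2 : ℝ) ^ n)⁻¹ • (r n).1 := by
    intro n
    induction n with
    | zero => simp [r]
    | succ n ih =>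
      rw [Finset.sum_range_succ, ih]
      change _ = x - ((2 : ℝ) ^ (n + 1))⁻¹ • ((2 : ℝ) • ((r n).1 - z (r n)))
      rw [pow_succ, mul_inv, mul_smul, inv_smul_smul₀ two_ne_zero, smul_sub]
      abel
  have hrem : Tendsto (fun n => ((2 : ℝ) ^ n)⁻¹ • (r n).1) atTop (𝓝 0) := by
    have hgeom : Tendsto (fun n : ℕ => (2⁻¹ : ℝ) ^ n * ε) atTop (𝓝 0) := by
      simpa using (tendsto_pow_atTop_nhds_zero_of_lt_one (r := (2⁻¹ : ℝ)) (by norm_num)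
        (by norm_num)).mul_const ε
    refine squeeze_zero_norm (fun n => ?_) hgeom
    rw [norm_smul, norm_inv, norm_pow, Real.norm_two, inv_pow]
    exact mul_le_mul_of_nonneg_left (mem_ball_zero_iff.1 (r n).2).le (by positivity)
  simpa [hsum] using tendsto_const_nhds.sub hrem

theorem OrderClosedTopology.of_isClosed_nonneg {X : Type*} [AddCommGroup X] [PartialOrder X]
    [IsOrderedAddMonoid X] [TopologicalSpace X] [IsTopologicalAddGroup X]
    (h : IsClosed {x : X | 0 ≤ x}) : OrderClosedTopology X :=
  ⟨(Set.ext fun _ => sub_nonneg : (fun p : X × X => p.2 - p.1) ⁻¹' {x | 0 ≤ x} = _) ▸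
    h.preimage (continuous_snd.sub continuous_fst)⟩

section Nets

variable {X : Type*} {ι κ : Type*} [Preorder ι] [Preorder κ]

theorem DecreasesToZero.comp_orderIso [Zero X] [PartialOrder X] {x : ι → X}
    (hx : DecreasesToZero x) (e : κ ≃o ι) : DecreasesToZero (x ∘ e) :=
  ⟨hx.1.comp_monotone e.monotone, by rw [e.surjective.range_comp]; exact hx.2⟩

theorem OrderConvZero.comp_orderIso [Zero X] [Neg X] [PartialOrder X] {x : ι → X}
    (hx : OrderConvZero x) (e : κ ≃o ι) : OrderConvZero (x ∘ e) := by
  obtain ⟨β, _, hβ, hdir, g, hg, hglb, hdom⟩ := hx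
  refine ⟨β, _, hβ, hdir, g, hg, hglb, fun b => ?_⟩
  obtain ⟨a₀, ha₀⟩ := hdom b
  exact ⟨e.symm a₀, fun a ha => ha₀ (e a) (e.symm_apply_le.1 ha)⟩

theorem DecreasesToZero.orderConvZero [AddGroup X] [PartialOrder X] [AddLeftMono X]
    [Nonempty ι] [IsDirected ι (· ≤ ·)] {x : ι → X} (hx : DecreasesToZero x) :
    OrderConvZero x := by
  have hnonneg : ∀ a, 0 ≤ x a := fun a => hx.2.1 ⟨a, rfl⟩
  -- `ι` may live in another universe than `X`, so the dominating net is indexed by the range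
  -- of `x`, ordered downwards
  refine ⟨(Set.range x)ᵒᵈ, inferInstance, inferInstance, ⟨?_⟩,
    fun b => ((OrderDual.ofDual b : Set.range x) : X), fun _ _ h => h, ?_, ?_⟩
  · rintro ⟨_, a, rfl⟩ ⟨_, b, rfl⟩
    obtain ⟨c, hac, hbc⟩ := directed_of (· ≤ ·) a b
    exact ⟨⟨x c, c, rfl⟩, hx.1 hac, hx.1 hbc⟩
  · rw [← Function.comp_def, OrderDual.ofDual.surjective.range_comp, Subtype.range_coe]
    exact hx.2
  · rintro ⟨_, a, rfl⟩
    exact ⟨a, fun a' ha' => ⟨(neg_nonpos.2 (hnonneg a)).trans (hnonneg a'), hx.1 ha'⟩⟩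

variable [NormedAddCommGroup X] [PartialOrder X] {C : ℝ}

theorem DecreasesToZero.isBoundedUnder_norm [Nonempty ι]
    (hC : ∀ x y : X, 0 ≤ x → x ≤ y → ‖x‖ ≤ C * ‖y‖) {x : ι → X} (hx : DecreasesToZero x) :
    IsBoundedUnder (· ≤ ·) atTop (fun a => ‖x a‖) := by
  obtain ⟨a₀⟩ := ‹Nonempty ι›
  exact isBoundedUnder_of_eventually_le ((eventually_ge_atTop a₀).mono
    fun a ha => hC _ _ (hx.2.1 ⟨a, rfl⟩) (hx.1 ha))

theorem OrderConvZero.isBoundedUnder_norm [IsOrderedAddMonoid X]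
    (hC : ∀ x y : X, 0 ≤ x → x ≤ y → ‖x‖ ≤ C * ‖y‖) {x : ι → X} (hx : OrderConvZero x) :
    IsBoundedUnder (· ≤ ·) atTop (fun a => ‖x a‖) := by
  obtain ⟨β, _, ⟨b⟩, -, g, -, -, hdom⟩ := hx
  obtain ⟨a₀, ha₀⟩ := hdom b
  refine isBoundedUnder_of_eventually_le (a := C * ‖g b + g b‖ + ‖g b‖)
    ((eventually_ge_atTop a₀).mono fun a ha => ?_)
  obtain ⟨hlow, hup⟩ := ha₀ a ha
  -- `0 ≤ x a + g b ≤ g b + g b`, so the normal cone bounds `x a + g b`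
  have hshift : ‖x a + g b‖ ≤ C * ‖g b + g b‖ :=
    hC _ _ (by simpa using add_le_add_left hlow (g b)) (add_le_add_left hup (g b))
  calc ‖x a‖ = ‖(x a + g b) - g b‖ := by rw [add_sub_cancel_right]
    _ ≤ ‖x a + g b‖ + ‖g b‖ := norm_sub_le _ _
    _ ≤ C * ‖g b + g b‖ + ‖g b‖ := by gcongr

end Nets

section NullingSubmodule

variable {𝕜 E F ι : Type*} [NontriviallyNormedField 𝕜] [NormedAddCommGroup E] [NormedSpace 𝕜 E]
  [NormedAddCommGroup F] [NormedSpace 𝕜 F] (l : Filter ι) (x : ι → E)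

def nullingSubmodule : Submodule 𝕜 (E →L[𝕜] F) where
  carrier := {T | Tendsto (fun a => ‖T (x a)‖) l (𝓝 0)}
  add_mem' {T S} hT hS :=
    squeeze_zero (fun _ => norm_nonneg _) (fun _ => norm_add_le _ _) (by simpa using hT.add hS)
  zero_mem' := by simp [tendsto_const_nhds]
  smul_mem' c T hT := by simpa [norm_smul] using hT.const_mul ‖c‖

def weakNullingSubmodule : Submodule 𝕜 (E →L[𝕜] F) where
  carrier := {T | ∀ f : F →L[𝕜] 𝕜, Tendsto (fun a => f (T (x a))) l (𝓝 0)}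
  add_mem' {T S} hT hS f := by simpa using (hT f).add (hS f)
  zero_mem' := by simp [tendsto_const_nhds]
  smul_mem' c T hT f := by simpa using (hT f).const_mul c

variable {l x}

theorem isClosed_nullingSubmodule (hx : IsBoundedUnder (· ≤ ·) l (fun a => ‖x a‖)) :
    IsClosed ((nullingSubmodule l x : Submodule 𝕜 (E →L[𝕜] F)) : Set (E →L[𝕜] F)) := by
  obtain ⟨b, hb⟩ := hx
  have hb' : ∀ᶠ a in l, ‖x a‖ ≤ max b 1 :=
    (eventually_map.1 hb).mono fun a ha => ha.trans (le_max_left b 1)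
  refine isClosed_of_closure_subset fun T hT => Metric.tendsto_nhds.2 fun ε hε => ?_
  obtain ⟨S, hS, hTS⟩ := Metric.mem_closure_iff.1 hT (ε / 2 / max b 1) (by positivity)
  filter_upwards [hb', Metric.tendsto_nhds.1 hS (ε / 2) (half_pos hε)] with a hxa hSa
  rw [Real.dist_0_eq_abs, abs_norm] at hSa ⊢
  have hTS_le : ‖T (x a)‖ - ‖S (x a)‖ ≤ dist T S * ‖x a‖ := by
    rw [dist_eq_norm]
    exact (norm_sub_norm_le _ _).trans ((T - S).le_opNorm (x a))
  have hTSx : dist T S * ‖x a‖ ≤ ε / 2 := by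
    calc dist T S * ‖x a‖ ≤ ε / 2 / max b 1 * max b 1 := by gcongr
      _ = ε / 2 := div_mul_cancel₀ _ (by positivity)
  linarith

theorem isClosed_weakNullingSubmodule (hx : IsBoundedUnder (· ≤ ·) l (fun a => ‖x a‖)) :
    IsClosed ((weakNullingSubmodule l x : Submodule 𝕜 (E →L[𝕜] F)) : Set (E →L[𝕜] F)) := by
  have hweak : ((weakNullingSubmodule l x : Submodule 𝕜 (E →L[𝕜] F)) : Set (E →L[𝕜] F)) =
      ⋂ f : F →L[𝕜] 𝕜,
      (f.comp ·) ⁻¹' ((nullingSubmodule l x : Submodule 𝕜 (E →L[𝕜] 𝕜)) : Set (E →L[𝕜] 𝕜)) := by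
    ext T
    simp [weakNullingSubmodule, nullingSubmodule, tendsto_zero_iff_norm_tendsto_zero]
  rw [hweak]
  exact isClosed_iInter fun f =>
    (isClosed_nullingSubmodule hx).preimage (continuous_const.clm_comp continuous_id)

end NullingSubmodule

section OperatorClasses

universe v

variable {X Y : Type*} [NormedAddCommGroup X] [NormedSpace ℝ X] [NormedAddCommGroup Y]
  [NormedSpace ℝ Y]

theorem IsClosedSubspaceOfBoundedOps.of_forall_nets {P : (X →ₗ[ℝ] Y) → Prop}
    (Q : ∀ {ι : Type v} [Preorder ι], (ι → X) → Prop)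
    (N : ∀ {ι : Type v} [Preorder ι], (ι → X) → Submodule ℝ (X →L[ℝ] Y))
    (hcont : ∀ T, P T → Continuous T)
    (hN : ∀ (ι : Type v) [Preorder ι] [Nonempty ι] [IsDirected ι (· ≤ ·)] (x : ι → X),
      Q x → IsClosed (N x : Set (X →L[ℝ] Y)))
    (hP : ∀ T : X →L[ℝ] Y, P T ↔ ∀ (ι : Type v) [Preorder ι] [Nonempty ι]
      [IsDirected ι (· ≤ ·)] (x : ι → X), Q x → T ∈ N x) :
    IsClosedSubspaceOfBoundedOps P := by
  refine ⟨hcont, ⨅ (ι : Type v) (_ : Preorder ι) (_ : Nonempty ι) (_ : IsDirected ι (· ≤ ·))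
    (x : ι → X) (_ : Q x), N x, ?_, fun T => by simp only [Submodule.mem_iInf, hP]⟩
  simp only [Submodule.coe_iInf]
  exact isClosed_iInter fun ι => isClosed_iInter fun _ => isClosed_iInter fun _ =>
    isClosed_iInter fun _ => isClosed_iInter fun x => isClosed_iInter (hN ι x)

theorem IsClosedSubspaceOfBoundedOps.of_forall_sequences {P : (X →ₗ[ℝ] Y) → Prop}
    (Q : (ℕ → X) → Prop) (N : (ℕ → X) → Submodule ℝ (X →L[ℝ] Y))
    (hcont : ∀ T, P T → Continuous T) (hN : ∀ x, Q x → IsClosed (N x : Set (X →L[ℝ] Y)))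
    (hP : ∀ T : X →L[ℝ] Y, P T ↔ ∀ x, Q x → T ∈ N x) :
    IsClosedSubspaceOfBoundedOps P := by
  refine ⟨hcont, ⨅ (x) (_ : Q x), N x, ?_, fun T => by simp only [Submodule.mem_iInf, hP]⟩
  simp only [Submodule.coe_iInf]
  exact isClosed_iInter fun x => isClosed_iInter (hN x)

variable [PartialOrder X] {T : X →ₗ[ℝ] Y}

theorem LebesgueOp.sigmaLebesgueOp (h : LebesgueOp T) : SigmaLebesgueOp T := fun x hx =>
  (h (ULift ℕ) (x ∘ ULift.orderIso) (hx.comp_orderIso _)).comp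
    (ULift.orderIso (α := ℕ)).symm.tendsto_atTop

theorem WLebesgueOp.sigmaWLebesgueOp (h : WLebesgueOp T) : SigmaWLebesgueOp T := fun x hx f =>
  (h (ULift ℕ) (x ∘ ULift.orderIso) (hx.comp_orderIso _) f).comp
    (ULift.orderIso (α := ℕ)).symm.tendsto_atTop

theorem OrderToNormContOp.sigmaOrderToNormContOp (h : OrderToNormContOp T) :
    SigmaOrderToNormContOp T := fun x hx =>
  (h (ULift ℕ) (x ∘ ULift.orderIso) (hx.comp_orderIso _)).comp
    (ULift.orderIso (α := ℕ)).symm.tendsto_atTop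

theorem OrderToWeakContOp.sigmaOrderToWeakContOp (h : OrderToWeakContOp T) :
    SigmaOrderToWeakContOp T := fun x hx f =>
  (h (ULift ℕ) (x ∘ ULift.orderIso) (hx.comp_orderIso _) f).comp
    (ULift.orderIso (α := ℕ)).symm.tendsto_atTop

theorem SigmaLebesgueOp.sigmaWLebesgueOp (h : SigmaLebesgueOp T) : SigmaWLebesgueOp T :=
  fun x hx f => squeeze_zero_norm (fun _ => f.le_opNorm _) (by simpa using (h x hx).const_mul ‖f‖)

theorem SigmaWLebesgueOp.tendsto_apply_of_summable [IsOrderedAddMonoid X] [OrderClosedTopology X]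
    (hT : SigmaWLebesgueOp T) {w : ℕ → X} (hw : ∀ n, 0 ≤ w n) (hs : Summable w)
    (f : Y →L[ℝ] ℝ) :
    Tendsto (fun n => f (T (w n))) atTop (𝓝 0) := by
  have h := hT _ (decreasesToZero_tsum_nat_add hw hs) f
  simpa only [Function.comp_def, ← map_sub, tsum_nat_add_sub_tsum_nat_add_succ hs, sub_zero] using
    h.sub (h.comp (tendsto_add_atTop_nat 1))

variable [AddLeftMono X]

theorem SigmaOrderToNormContOp.sigmaLebesgueOp (h : SigmaOrderToNormContOp T) :
    SigmaLebesgueOp T := fun x hx => h x hx.orderConvZero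

theorem SigmaOrderToWeakContOp.sigmaWLebesgueOp (h : SigmaOrderToWeakContOp T) :
    SigmaWLebesgueOp T := fun x hx => h x hx.orderConvZero

end OperatorClasses

section OrderedBanachSpace

variable {X : Type*} [NormedAddCommGroup X] [NormedSpace ℝ X] [PartialOrder X] [PosSMulMono ℝ X]

variable (X) in
def positiveUnitBall : Set X := Ici 0 ∩ Metric.closedBall 0 1

theorem convex_positiveUnitBall [IsOrderedAddMonoid X] : Convex ℝ (positiveUnitBall X) :=
  (convex_Ici 0).inter (convex_closedBall 0 1)

theorem inv_smul_mem_positiveUnitBall {a : X} {c : ℝ} (ha : 0 ≤ a) (hc : 0 < c) (hac : ‖a‖ ≤ c) :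
    c⁻¹ • a ∈ positiveUnitBall X :=
  ⟨smul_nonneg (inv_nonneg.2 hc.le) ha, by
    rw [mem_closedBall_zero_iff, norm_smul, Real.norm_of_nonneg (inv_nonneg.2 hc.le)]
    exact inv_mul_le_one_of_le₀ hac hc.le⟩

theorem closure_positiveUnitBall_sub_mem_nhds [IsOrderedAddMonoid X] [CompleteSpace X]
    (hgen : ∀ x : X, ∃ a b : X, 0 ≤ a ∧ 0 ≤ b ∧ x = a - b) :
    closure (positiveUnitBall X - positiveUnitBall X) ∈ 𝓝 (0 : X) := by
  set D := positiveUnitBall X - positiveUnitBall X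
  have hcover : ⋃ n : ℕ, closure (((n : ℝ) + 1) • D) = univ := by
    refine eq_univ_of_forall fun x => ?_
    obtain ⟨a, b, ha, hb, rfl⟩ := hgen x
    obtain ⟨n, hn⟩ := exists_nat_ge (max ‖a‖ ‖b‖)
    have hn₀ : (0 : ℝ) < n + 1 := by positivity
    refine mem_iUnion.2 ⟨n, subset_closure ?_⟩
    rw [mem_smul_set_iff_inv_smul_mem₀ hn₀.ne', smul_sub]
    exact sub_mem_sub
      (inv_smul_mem_positiveUnitBall ha hn₀ (by linarith [le_max_left ‖a‖ ‖b‖]))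
      (inv_smul_mem_positiveUnitBall hb hn₀ (by linarith [le_max_right ‖a‖ ‖b‖]))
  obtain ⟨n, hn⟩ := nonempty_interior_of_iUnion_of_closed (fun _ => isClosed_closure) hcover
  have hn₀ : (n : ℝ) + 1 ≠ 0 := by positivity
  rw [closure_smul₀' hn₀, interior_smul₀ hn₀, smul_set_nonempty] at hn
  obtain ⟨u, hu⟩ := hn
  -- `interior (closure D)` is convex and symmetric, so it contains `(u + (-u)) / 2 = 0`.
  have hconv : Convex ℝ (interior (closure D)) :=
    (convex_positiveUnitBall.sub convex_positiveUnitBall).closure.interior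
  have hneg : -u ∈ interior (closure D) := by
    have h := (Homeomorph.neg X).preimage_interior (closure D)
    rw [(Homeomorph.neg X).preimage_closure] at h
    have hD : -D = D := neg_sub _ _
    simp only [Homeomorph.coe_neg, neg_preimage, hD] at h
    exact h ▸ Set.neg_mem_neg.2 hu
  have h0 : (0 : X) ∈ interior (closure D) := by
    simpa using hconv hu hneg one_half_pos.le one_half_pos.le (add_halves 1)
  exact mem_of_superset (isOpen_interior.mem_nhds h0) interior_subset

variable [IsOrderedAddMonoid X] [OrderClosedTopology X] [CompleteSpace X]

theorem exists_hasSum_two_pow_inv_smul_positiveUnitBall {w : ℕ → X}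
    (hw : ∀ n, w n ∈ positiveUnitBall X) :
    ∃ p ∈ positiveUnitBall X, HasSum (fun n => ((2 : ℝ) ^ n)⁻¹ • w n) ((2 : ℝ) • p) := by
  have hnorm : ∀ n, ‖((2 : ℝ) ^ n)⁻¹ • w n‖ ≤ (1 / 2) ^ n := fun n => by
    rw [norm_smul, norm_inv, norm_pow, Real.norm_two, one_div, inv_pow]
    exact mul_le_of_le_one_right (by positivity) (mem_closedBall_zero_iff.1 (hw n).2)
  have hs := (Summable.of_norm_bounded summable_geometric_two hnorm).hasSum
  refine ⟨(2 : ℝ)⁻¹ • ∑' n, ((2 : ℝ) ^ n)⁻¹ • w n, inv_smul_mem_positiveUnitBall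
    (tsum_nonneg fun n => smul_nonneg (by positivity) (hw n).1) two_pos
    (tsum_of_norm_bounded hasSum_geometric_two hnorm), ?_⟩
  rwa [smul_inv_smul₀ two_ne_zero]

theorem exists_ball_subset_two_smul_positiveUnitBall_sub
    (hgen : ∀ x : X, ∃ a b : X, 0 ≤ a ∧ 0 ≤ b ∧ x = a - b) :
    ∃ ε > 0, Metric.ball (0 : X) ε ⊆ (2 : ℝ) • (positiveUnitBall X - positiveUnitBall X) := by
  obtain ⟨ε, hε, hball⟩ := Metric.mem_nhds_iff.1 (closure_positiveUnitBall_sub_mem_nhds hgen)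
  refine ⟨ε, hε, fun x hx => ?_⟩
  obtain ⟨z, hz, hlim⟩ := exists_tendsto_sum_of_ball_subset_closure hball hx
  choose a ha b hb hab using hz
  obtain ⟨p, hp, hpa⟩ := exists_hasSum_two_pow_inv_smul_positiveUnitBall ha
  obtain ⟨q, hq, hqb⟩ := exists_hasSum_two_pow_inv_smul_positiveUnitBall hb
  have hpq : HasSum (fun n => ((2 : ℝ) ^ n)⁻¹ • z n) ((2 : ℝ) • (p - q)) := by
    simpa only [← hab, smul_sub] using hpa.sub hqb
  rw [tendsto_nhds_unique hlim hpq.tendsto_sum_nat]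
  exact smul_mem_smul_set (sub_mem_sub hp hq)

variable {Y : Type*} [NormedAddCommGroup Y] [NormedSpace ℝ Y]

theorem LinearMap.continuous_of_forall_positiveUnitBall_norm_le
    (hgen : ∀ x : X, ∃ a b : X, 0 ≤ a ∧ 0 ≤ b ∧ x = a - b) (T : X →ₗ[ℝ] Y) {K : ℝ}
    (hK : ∀ z ∈ positiveUnitBall X, ‖T z‖ ≤ K) : Continuous T := by
  obtain ⟨ε, hε, hball⟩ := exists_ball_subset_two_smul_positiveUnitBall_sub hgen
  obtain ⟨C, hC⟩ := LinearMap.bound_of_ball_bound hε (4 * K) T fun x hx => by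
    obtain ⟨_, ⟨a, ha, b, hb, rfl⟩, rfl⟩ := hball hx
    calc ‖T ((2 : ℝ) • (a - b))‖ = 2 * ‖T a - T b‖ := by
          rw [map_smul, map_sub, norm_smul, Real.norm_two]
      _ ≤ 2 * (K + K) := by
          gcongr
          exact (norm_sub_le _ _).trans (add_le_add (hK a ha) (hK b hb))
      _ = 4 * K := by ring
  exact AddMonoidHomClass.continuous_of_bound T C hC

theorem SigmaWLebesgueOp.exists_forall_positiveUnitBall_norm_le {T : X →ₗ[ℝ] Y}
    (hT : SigmaWLebesgueOp T) : ∃ K, ∀ z ∈ positiveUnitBall X, ‖T z‖ ≤ K := by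
  by_contra! h
  choose z hzP hz using h
  -- `w n = 2⁻ⁿ z (n 2ⁿ)` is a summable positive sequence with `n < ‖T (w n)‖`
  let w : ℕ → X := fun n => ((2 : ℝ) ^ n)⁻¹ • z (n * 2 ^ n)
  obtain ⟨p, -, hp⟩ := exists_hasSum_two_pow_inv_smul_positiveUnitBall fun n => hzP (n * 2 ^ n)
  obtain ⟨C, hC⟩ := exists_norm_le_of_weakly_bounded (y := fun n => T (w n)) fun f => by
    obtain ⟨C, hC⟩ := (hT.tendsto_apply_of_summable
      (fun n => smul_nonneg (by positivity) (hzP _).1) hp.summable f).norm.bddAbove_range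
    exact ⟨C, fun n => hC ⟨n, rfl⟩⟩
  obtain ⟨n, hn⟩ := exists_nat_gt C
  have hTw : (n : ℝ) < ‖T (w n)‖ := by
    calc (n : ℝ) = ((2 : ℝ) ^ n)⁻¹ * (n * 2 ^ n) := by field_simp
      _ < ((2 : ℝ) ^ n)⁻¹ * ‖T (z (n * 2 ^ n))‖ := by gcongr; exact hz _
      _ = ‖T (w n)‖ := by rw [map_smul, norm_smul, norm_inv, norm_pow, Real.norm_two]
  linarith [hC n]

theorem SigmaWLebesgueOp.continuous (hgen : ∀ x : X, ∃ a b : X, 0 ≤ a ∧ 0 ≤ b ∧ x = a - b)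
    {T : X →ₗ[ℝ] Y} (hT : SigmaWLebesgueOp T) : Continuous T :=
  have ⟨_, hK⟩ := hT.exists_forall_positiveUnitBall_norm_le
  T.continuous_of_forall_positiveUnitBall_norm_le hgen hK

end OrderedBanachSpace

section Statement15

variable {X Y : Type*} [NormedAddCommGroup X] [NormedSpace ℝ X] [PartialOrder X]
  [CovariantClass X X (· + ·) (· ≤ ·)] [PosSMulMono ℝ X] [CompleteSpace X]
  [NormedAddCommGroup Y] [NormedSpace ℝ Y]

/-- if `X` is an ordered Banach space with a closed generating normal cone
and `Y` is a normed space, then the Lebesgue, σ-Lebesgue, w-Lebesgue, σ-w-Lebesgue,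
order-to-norm continuous, σ-order-to-norm continuous, order-to-weak continuous and
σ-order-to-weak continuous operators all form norm closed subspaces of `L(X,Y)`. -/
theorem lebesgue_classes_closed_subspaces
    (hclosed : IsClosed {x : X | 0 ≤ x})
    (hgen : ∀ x : X, ∃ a b : X, 0 ≤ a ∧ 0 ≤ b ∧ x = a - b)
    (hnormal : ∃ C : ℝ, 0 < C ∧ ∀ x y : X, 0 ≤ x → x ≤ y → ‖x‖ ≤ C * ‖y‖) :
    IsClosedSubspaceOfBoundedOps (X := X) (Y := Y) (fun T => LebesgueOp T) ∧
    IsClosedSubspaceOfBoundedOps (X := X) (Y := Y) (fun T => SigmaLebesgueOp T) ∧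
    IsClosedSubspaceOfBoundedOps (X := X) (Y := Y) (fun T => WLebesgueOp T) ∧
    IsClosedSubspaceOfBoundedOps (X := X) (Y := Y) (fun T => SigmaWLebesgueOp T) ∧
    IsClosedSubspaceOfBoundedOps (X := X) (Y := Y) (fun T => OrderToNormContOp T) ∧
    IsClosedSubspaceOfBoundedOps (X := X) (Y := Y) (fun T => SigmaOrderToNormContOp T) ∧
    IsClosedSubspaceOfBoundedOps (X := X) (Y := Y) (fun T => OrderToWeakContOp T) ∧
    IsClosedSubspaceOfBoundedOps (X := X) (Y := Y) (fun T => SigmaOrderToWeakContOp T) := by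
  obtain ⟨C, -, hC⟩ := hnormal
  have : IsOrderedAddMonoid X :=
    ⟨fun _ _ h c => add_le_add_left h c, fun _ _ h c => add_le_add_right h c⟩
  have := OrderClosedTopology.of_isClosed_nonneg hclosed
  have hcont (T : X →ₗ[ℝ] Y) : SigmaWLebesgueOp T → Continuous T :=
    SigmaWLebesgueOp.continuous hgen
  refine ⟨.of_forall_nets DecreasesToZero (nullingSubmodule atTop)
      (fun T hT => hcont T hT.sigmaLebesgueOp.sigmaWLebesgueOp)
      (fun _ _ _ _ _ hx => isClosed_nullingSubmodule (hx.isBoundedUnder_norm hC)) fun _ => Iff.rfl,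
    .of_forall_sequences DecreasesToZero (nullingSubmodule atTop)
      (fun T hT => hcont T hT.sigmaWLebesgueOp)
      (fun _ hx => isClosed_nullingSubmodule (hx.isBoundedUnder_norm hC)) fun _ => Iff.rfl,
    .of_forall_nets DecreasesToZero (weakNullingSubmodule atTop)
      (fun T hT => hcont T hT.sigmaWLebesgueOp)
      (fun _ _ _ _ _ hx => isClosed_weakNullingSubmodule (hx.isBoundedUnder_norm hC))
      fun _ => Iff.rfl,
    .of_forall_sequences DecreasesToZero (weakNullingSubmodule atTop) hcont
      (fun _ hx => isClosed_weakNullingSubmodule (hx.isBoundedUnder_norm hC)) fun _ => Iff.rfl,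
    .of_forall_nets OrderConvZero (nullingSubmodule atTop)
      (fun T hT => hcont T hT.sigmaOrderToNormContOp.sigmaLebesgueOp.sigmaWLebesgueOp)
      (fun _ _ _ _ _ hx => isClosed_nullingSubmodule (hx.isBoundedUnder_norm hC)) fun _ => Iff.rfl,
    .of_forall_sequences OrderConvZero (nullingSubmodule atTop)
      (fun T hT => hcont T hT.sigmaLebesgueOp.sigmaWLebesgueOp)
      (fun _ hx => isClosed_nullingSubmodule (hx.isBoundedUnder_norm hC)) fun _ => Iff.rfl,
    .of_forall_nets OrderConvZero (weakNullingSubmodule atTop)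
      (fun T hT => hcont T hT.sigmaOrderToWeakContOp.sigmaWLebesgueOp)
      (fun _ _ _ _ _ hx => isClosed_weakNullingSubmodule (hx.isBoundedUnder_norm hC))
      fun _ => Iff.rfl,
    .of_forall_sequences OrderConvZero (weakNullingSubmodule atTop)
      (fun T hT => hcont T hT.sigmaWLebesgueOp)
      (fun _ hx => isClosed_weakNullingSubmodule (hx.isBoundedUnder_norm hC)) fun _ => Iff.rfl⟩

end Statement15
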